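/- Let k be an algebraically closed field of characteristic zero and R := k[[x,y]]/(x³ + xy³), the one-dimensional simple hypersurface singularity of type E₇. Let A := R/(x̄) where x̄ is the image of x, and let C be the cokernel of the R-linear map R² → R² given by (m,n) ↦ (x̄²m + x̄ȳn, x̄ȳ²m − x̄²n). Then Ext¹_R(A, A) = 0 and Ext¹_R(A, C) = 0. -/

import Mathlib

/-!
Since `x³ + xy³ = x·g` with `g = x² + y³` in the domain `k[[x,y]]`, the annihilator of `x̄` in `R`
is `(ḡ)` and that of `ḡ` is `(x̄)`. Hence `A = R/(x̄)` has the 2-periodic free resolution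
`⋯ → R --ḡ--> R --x̄--> R --ḡ--> R --x̄--> R → A`, and `Ext¹(A, N)` is the homology of
`N --x̄--> N --ḡ--> N`. It vanishes for `N = A` and `N = C` because `ḡ` is a nonzerodivisor
modulo `x̄` (as `x ∤ y³`) and every entry of the presentation matrix of `C` is divisible by `x̄`.
-/

open CategoryTheory

set_option synthInstance.maxHeartbeats 1000000
set_option maxHeartbeats 1000000

/-- The first Ext group of two modules over a commutative ring. -/
noncomputable abbrev Ext1 (A : Type) [CommRing A] (M N : ModuleCat A) : Type :=
  ((Ext A (ModuleCat A) 1).obj (Opposite.op M)).obj N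

/-- `S = k[[x,y]]`, the formal power series ring in two variables. -/
abbrev PSring (k : Type) [Field k] : Type := MvPowerSeries (Fin 2) k

/-- `R = k[[x,y]]/(x³ + xy³)`, the `E₇` curve singularity. -/
abbrev E7 (k : Type) [Field k] : Type :=
  PSring k ⧸ Ideal.span
    {(MvPowerSeries.X 0 : PSring k) ^ 3 +
      (MvPowerSeries.X 0 : PSring k) * (MvPowerSeries.X 1 : PSring k) ^ 3}

/-- The image of `x` in `R`. -/
noncomputable abbrev xE7 (k : Type) [Field k] : E7 k :=
  Ideal.Quotient.mk _ (MvPowerSeries.X 0 : PSring k)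

/-- The image of `y` in `R`. -/
noncomputable abbrev yE7 (k : Type) [Field k] : E7 k :=
  Ideal.Quotient.mk _ (MvPowerSeries.X 1 : PSring k)

/-- The module `A = R/(x̄)`. -/
abbrev Amod (k : Type) [Field k] : Type := E7 k ⧸ Ideal.span {xE7 k}

/-- The presentation map `R² → R²`, `(m,n) ↦ (x̄²m + x̄ȳn, x̄ȳ²m − x̄²n)`. -/
noncomputable def presC (k : Type) [Field k] : (E7 k × E7 k) →ₗ[E7 k] (E7 k × E7 k) :=
  LinearMap.prod
    ((xE7 k ^ 2) • LinearMap.fst (E7 k) (E7 k) (E7 k) +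
      (xE7 k * yE7 k) • LinearMap.snd (E7 k) (E7 k) (E7 k))
    ((xE7 k * yE7 k ^ 2) • LinearMap.fst (E7 k) (E7 k) (E7 k) -
      (xE7 k ^ 2) • LinearMap.snd (E7 k) (E7 k) (E7 k))

/-- The module `C`, the cokernel of `presC`. -/
abbrev Cmod (k : Type) [Field k] : Type :=
  (E7 k × E7 k) ⧸ LinearMap.range (presC k)


/-- An exact pair of zero divisors. -/
structure IsExactPair {R : Type*} [CommRing R] (a b : R) : Prop where
  mul_eq_zero : a * b = 0
  dvd_of_mul_left_eq_zero : ∀ r, a * r = 0 → b ∣ r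
  dvd_of_mul_right_eq_zero : ∀ r, b * r = 0 → a ∣ r

namespace ModuleCat

variable {R : Type*} [CommRing R]

abbrev mulLeft (r : R) : of R R ⟶ of R R := ofHom (LinearMap.mulLeft R r)

lemma mulLeft_comp_mulLeft_of_mul_eq_zero {r s : R} (h : s * r = 0) :
    mulLeft r ≫ mulLeft s = 0 := by
  ext; simp [h]

lemma exact_mulLeft_mulLeft {a b : R} (w : mulLeft a ≫ mulLeft b = 0)
    (h : ∀ r, b * r = 0 → a ∣ r) :
    (ShortComplex.mk (mulLeft a) (mulLeft b) w).Exact := by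
  rw [ShortComplex.moduleCat_exact_iff]
  intro r hr
  obtain ⟨s, rfl⟩ := h r hr
  exact ⟨s, rfl⟩

lemma mulLeft_comp_ofHom_mkQ (a : R) : mulLeft a ≫ ofHom (Ideal.span {a}).mkQ = 0 := by
  ext; simp

lemma exact_mulLeft_ofHom_mkQ (a : R) :
    (ShortComplex.mk _ _ (mulLeft_comp_ofHom_mkQ a)).Exact := by
  rw [ShortComplex.moduleCat_exact_iff]
  intro r hr
  obtain ⟨s, rfl⟩ := Ideal.mem_span_singleton.1 ((Submodule.Quotient.mk_eq_zero _).1 hr)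
  exact ⟨s, rfl⟩

end ModuleCat

namespace IsExactPair

open ModuleCat HomologicalComplex

variable {R : Type*} [CommRing R] {a b : R}

/-- The 2-periodic complex `⋯ → R --b--> R --a--> R --b--> R --a--> R`. -/
noncomputable def complex (h : IsExactPair a b) : ChainComplex (ModuleCat R) ℕ :=
  alternatingConst (of R R) (φ := mulLeft b) (ψ := mulLeft a)
    (mulLeft_comp_mulLeft_of_mul_eq_zero h.mul_eq_zero)
    (mulLeft_comp_mulLeft_of_mul_eq_zero (by rw [mul_comm, h.mul_eq_zero]))
    fun _ _ => ComplexShape.down_nat_odd_add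

lemma complex_d_one_zero (h : IsExactPair a b) : h.complex.d 1 0 = mulLeft a := rfl

lemma complex_d_two_one (h : IsExactPair a b) : h.complex.d 2 1 = mulLeft b := rfl

lemma exactAt_complex_succ (h : IsExactPair a b) (n : ℕ) : h.complex.ExactAt (n + 1) := by
  rw [exactAt_iff' _ (n + 2) (n + 1) n (by simp) (by simp)]
  rcases Nat.even_or_odd (n + 1) with hn | hn
  · exact (ShortComplex.exact_iff_of_iso
      (alternatingConstScIsoEven _ _ _ _ (by simp) (by simp) hn)).2
      (exact_mulLeft_mulLeft _ h.dvd_of_mul_right_eq_zero)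
  · exact (ShortComplex.exact_iff_of_iso
      (alternatingConstScIsoOdd _ _ _ _ (by simp) (by simp) hn)).2
      (exact_mulLeft_mulLeft _ h.dvd_of_mul_left_eq_zero)

noncomputable def projectiveResolution (h : IsExactPair a b) :
    ProjectiveResolution (of R (R ⧸ Ideal.span {a})) where
  complex := h.complex
  projective _ := inferInstanceAs (Projective (of R R))
  π := (ChainComplex.toSingle₀Equiv _ _).symm
    ⟨ofHom (Ideal.span {a}).mkQ, mulLeft_comp_ofHom_mkQ a⟩
  quasiIso := ⟨fun n => by
    cases n with
    | zero =>
      rw [ChainComplex.quasiIsoAt₀_iff, ShortComplex.quasiIso_iff_of_zeros' _ rfl rfl rfl]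
      exact ⟨exact_mulLeft_ofHom_mkQ a,
        (ModuleCat.epi_iff_surjective _).2 (Submodule.mkQ_surjective _)⟩
    | succ n =>
      rw [quasiIsoAt_iff_exactAt' (hL := ChainComplex.exactAt_succ_single_obj ..)]
      exact h.exactAt_complex_succ n⟩

theorem subsingleton_ext_one (h : IsExactPair a b) (N : ModuleCat R)
    (hN : ∀ m : N, b • m = 0 → ∃ m', m = a • m') :
    Subsingleton
      (((Ext R (ModuleCat R) 1).obj (Opposite.op (of R (R ⧸ Ideal.span {a})))).obj N) := by
  have hexact : (h.complex.linearYonedaObj R N).ExactAt 1 := by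
    rw [exactAt_iff' _ 0 1 2 (by simp) (by simp), ShortComplex.moduleCat_exact_iff]
    intro φ hφ
    change of R R ⟶ N at φ
    have hφ' : mulLeft b ≫ φ = 0 := by rw [← complex_d_two_one h]; exact hφ
    have hb : φ b = 0 := by simpa using congr($hφ' 1)
    obtain ⟨m, hm⟩ := hN (φ 1) (by rw [← map_smul, smul_eq_mul, mul_one]; exact hb)
    refine ⟨ofHom (LinearMap.toSpanSingleton R N m), ?_⟩
    change h.complex.d 1 0 ≫ _ = φ
    rw [complex_d_one_zero]
    ext
    change (a * 1) • m = φ 1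
    rw [mul_one, hm]
  exact ModuleCat.subsingleton_of_isZero
    (((exactAt_iff_isZero_homology _ _).1 hexact).of_iso (h.projectiveResolution.isoExt 1 N))

end IsExactPair

lemma MvPowerSeries.X_dvd_of_dvd_X_pow_mul {σ K : Type*} [CommSemiring K] {s t : σ}
    (hst : s ≠ t) {n : ℕ} {φ : MvPowerSeries σ K} (h : X s ∣ X t ^ n * φ) : X s ∣ φ := by
  classical
  rw [X_dvd_iff] at h ⊢
  intro m hm
  have := h (m + Finsupp.single t n) (by simp [hm, hst])
  rwa [X_pow_eq, coeff_monomial_mul, if_pos le_add_self, add_tsub_cancel_right, one_mul] at this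

namespace Ideal.Quotient

variable {S : Type*} [CommRing S]

theorem mk_dvd_of_mk_mul_eq_zero [NoZeroDivisors S] {f p q : S} (hf : f = p * q) (hp : p ≠ 0)
    {r : S ⧸ span {f}} (h : mk _ p * r = 0) : mk _ q ∣ r := by
  obtain ⟨s, rfl⟩ := mk_surjective r
  rw [← map_mul, eq_zero_iff_mem, mem_span_singleton, hf] at h
  obtain ⟨t, ht⟩ := h
  rw [mul_assoc] at ht
  exact ⟨mk _ t, by rw [mul_left_cancel₀ hp ht, map_mul]⟩

theorem isExactPair_mk_of_eq_mul [NoZeroDivisors S] {f p q : S} (hf : f = p * q) (hp : p ≠ 0)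
    (hq : q ≠ 0) : IsExactPair (mk (span {f}) p) (mk _ q) where
  mul_eq_zero := by rw [← map_mul, ← hf, eq_zero_iff_mem]; exact mem_span_singleton_self f
  dvd_of_mul_left_eq_zero _ := mk_dvd_of_mk_mul_eq_zero hf hp
  dvd_of_mul_right_eq_zero _ := mk_dvd_of_mk_mul_eq_zero (hf.trans (mul_comm p q)) hq

theorem mk_dvd_of_mk_dvd_mul {f x q : S} (hxf : x ∣ f) (hq : ∀ a, x ∣ q * a → x ∣ a)
    {r : S ⧸ span {f}} (h : mk _ x ∣ mk _ q * r) : mk _ x ∣ r := by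
  obtain ⟨a, rfl⟩ := mk_surjective r
  obtain ⟨c, hc⟩ := h
  obtain ⟨c, rfl⟩ := mk_surjective c
  rw [← map_mul, ← map_mul, Ideal.Quotient.eq, mem_span_singleton] at hc
  obtain ⟨t, ht⟩ := hc
  obtain ⟨u, rfl⟩ := hxf
  obtain ⟨a', rfl⟩ := hq a ⟨c + u * t, by linear_combination ht⟩
  exact ⟨mk _ a', by rw [map_mul]⟩

end Ideal.Quotient

noncomputable abbrev gE7 (k : Type) [Field k] : E7 k := xE7 k ^ 2 + yE7 k ^ 3

namespace E7

open MvPowerSeries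

variable (k : Type) [Field k]

lemma X_zero_ne_zero : (X 0 : PSring k) ≠ 0 := fun h => by
  simpa using congr(coeff (Finsupp.single 0 1) $h)

lemma X_zero_sq_add_X_one_pow_three_ne_zero : (X 0 ^ 2 + X 1 ^ 3 : PSring k) ≠ 0 := fun h => by
  simpa [coeff_X_pow, Finsupp.single_eq_single_iff] using congr(coeff (Finsupp.single 1 3) $h)

lemma X_zero_pow_three_add_eq_mul :
    (X 0 ^ 3 + X 0 * X 1 ^ 3 : PSring k) = X 0 * (X 0 ^ 2 + X 1 ^ 3) := by
  ring

lemma isExactPair_x_g : IsExactPair (xE7 k) (gE7 k) := by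
  simpa using Ideal.Quotient.isExactPair_mk_of_eq_mul (X_zero_pow_three_add_eq_mul k)
    (X_zero_ne_zero k) (X_zero_sq_add_X_one_pow_three_ne_zero k)

lemma X_zero_dvd_of_dvd_mul {a : PSring k} (h : X 0 ∣ (X 0 ^ 2 + X 1 ^ 3) * a) : X 0 ∣ a := by
  refine X_dvd_of_dvd_X_pow_mul (t := 1) (n := 3) (by decide) ?_
  rw [add_mul] at h
  exact (dvd_add_right (Dvd.intro (X 0 * a) (by ring))).1 h

lemma x_dvd_of_x_dvd_g_mul {r : E7 k} (h : xE7 k ∣ gE7 k * r) : xE7 k ∣ r :=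
  Ideal.Quotient.mk_dvd_of_mk_dvd_mul (X_zero_pow_three_add_eq_mul k ▸ dvd_mul_right _ _)
    (fun _ => X_zero_dvd_of_dvd_mul k) (by simpa using h)

lemma Amod.exists_eq_x_smul_of_g_smul_eq_zero {m : Amod k} (hm : gE7 k • m = 0) :
    ∃ m', m = xE7 k • m' := by
  obtain ⟨r, rfl⟩ := Submodule.Quotient.mk_surjective _ m
  rw [← Submodule.Quotient.mk_smul, Submodule.Quotient.mk_eq_zero, smul_eq_mul,
    Ideal.mem_span_singleton] at hm
  refine ⟨0, ?_⟩
  rw [smul_zero, Submodule.Quotient.mk_eq_zero, Ideal.mem_span_singleton]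
  exact x_dvd_of_x_dvd_g_mul k hm

lemma presC_apply (q : E7 k × E7 k) :
    presC k q =
      (xE7 k * (xE7 k * q.1 + yE7 k * q.2), xE7 k * (yE7 k ^ 2 * q.1 - xE7 k * q.2)) := by
  ext <;> simp [presC] <;> ring

lemma Cmod.exists_eq_x_smul_of_g_smul_eq_zero {m : Cmod k} (hm : gE7 k • m = 0) :
    ∃ m', m = xE7 k • m' := by
  obtain ⟨p, rfl⟩ := Submodule.Quotient.mk_surjective _ m
  rw [← Submodule.Quotient.mk_smul, Submodule.Quotient.mk_eq_zero] at hm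
  obtain ⟨q, hq⟩ := hm
  rw [presC_apply, Prod.ext_iff] at hq
  obtain ⟨p₁, hp₁⟩ := x_dvd_of_x_dvd_g_mul k (Dvd.intro _ hq.1)
  obtain ⟨p₂, hp₂⟩ := x_dvd_of_x_dvd_g_mul k (Dvd.intro _ hq.2)
  exact ⟨Submodule.Quotient.mk (p₁, p₂), by
    rw [← Submodule.Quotient.mk_smul]
    exact congrArg _ (Prod.ext hp₁ hp₂)⟩

end E7

theorem statement14_general (k : Type) [Field k] :
    Subsingleton (Ext1 (E7 k) (ModuleCat.of _ (Amod k)) (ModuleCat.of _ (Amod k))) ∧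
    Subsingleton (Ext1 (E7 k) (ModuleCat.of _ (Amod k)) (ModuleCat.of _ (Cmod k))) :=
  ⟨(E7.isExactPair_x_g k).subsingleton_ext_one _
      fun _ => E7.Amod.exists_eq_x_smul_of_g_smul_eq_zero k,
    (E7.isExactPair_x_g k).subsingleton_ext_one _
      fun _ => E7.Cmod.exists_eq_x_smul_of_g_smul_eq_zero k⟩

theorem statement14 (k : Type) [Field k] [IsAlgClosed k] [CharZero k] :
    Subsingleton (Ext1 (E7 k) (ModuleCat.of _ (Amod k)) (ModuleCat.of _ (Amod k))) ∧
    Subsingleton (Ext1 (E7 k) (ModuleCat.of _ (Amod k)) (ModuleCat.of _ (Cmod k))) :=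
  statement14_general k
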